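/- arXiv:1510.02088 — 7 statements merged into one kernel-verified Lean document; each statement's English description precedes it below -/
import Mathlib

section
/- For every real d > 1, any two closed balls in Euclidean 3-space with centers on the prolate ellipsoid E_d = {p : (p 0)²/d² + (p 1)² + (p 2)² = 1}, which are non-overlapping (distance between centers at least the sum of radii) and neither of which contains the origin, do not generate the shadow at the origin: there exists a nonzero vector v such that the line {t • v : t ∈ ℝ} intersects neither ball. -/
/-!
Two centers span a subspace of dimension at most two, so in three-space some nonzero `v` is
orthogonal to both of them. Each point of the line `ℝ v` then lies at distance at least `‖a i‖`
from `a i` by Pythagoras, and `‖a i‖ > r i` because the ball misses the origin.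
-/

open Metric

section

variable {E : Type*} [NormedAddCommGroup E] [InnerProductSpace ℝ E]

theorem exists_ne_zero_forall_inner_eq_zero [FiniteDimensional ℝ E] {ι : Type*} [Fintype ι]
    (a : ι → E) (hcard : Fintype.card ι < Module.finrank ℝ E) :
    ∃ v : E, v ≠ 0 ∧ ∀ i, inner ℝ (a i) v = 0 := by
  have hK : Submodule.span ℝ (Set.range a) ≠ ⊤ := fun hK => by
    have := finrank_range_le_card (R := ℝ) a
    rw [Set.finrank, hK, finrank_top] at this
    omega
  obtain ⟨v, hvK, hv⟩ :=
    Submodule.exists_mem_ne_zero_of_ne_bot (mt Submodule.orthogonal_eq_bot_iff.mp hK)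
  exact ⟨v, hv, fun i =>
    Submodule.inner_right_of_mem_orthogonal (Submodule.subset_span (Set.mem_range_self i)) hvK⟩

theorem norm_le_dist_of_inner_eq_zero {x a : E} (h : inner ℝ x a = 0) : ‖a‖ ≤ dist x a := by
  have hpyth := norm_sub_sq_eq_norm_sq_add_norm_sq_real h
  rw [dist_eq_norm]
  nlinarith [norm_nonneg (x - a), norm_nonneg a, mul_self_nonneg ‖x‖]

theorem smul_notMem_closedBall_of_inner_eq_zero {v a : E} {r : ℝ} (hva : inner ℝ a v = 0)
    (h0 : (0 : E) ∉ closedBall a r) (t : ℝ) : t • v ∉ closedBall a r := by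
  rw [mem_closedBall, dist_zero_left, not_le] at h0
  rw [mem_closedBall, not_le]
  have hinner : inner ℝ (t • v) a = 0 := by
    rw [real_inner_smul_left, real_inner_comm, hva, mul_zero]
  exact h0.trans_le (norm_le_dist_of_inner_eq_zero hinner)

theorem exists_line_disjoint_closedBalls [FiniteDimensional ℝ E] {ι : Type*} [Fintype ι]
    (a : ι → E) (r : ι → ℝ) (hcard : Fintype.card ι < Module.finrank ℝ E)
    (h0 : ∀ i, (0 : E) ∉ closedBall (a i) (r i)) :
    ∃ v : E, v ≠ 0 ∧ ∀ (t : ℝ) (i : ι), t • v ∉ closedBall (a i) (r i) := by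
  obtain ⟨v, hv, horth⟩ := exists_ne_zero_forall_inner_eq_zero a hcard
  exact ⟨v, hv, fun t i => smul_notMem_closedBall_of_inner_eq_zero (horth i) (h0 i) t⟩

end

theorem two_closed_balls_no_shadow_at_ellipsoid_center_general
    (a : Fin 2 → EuclideanSpace ℝ (Fin 3)) (r : Fin 2 → ℝ)
    (h0 : ∀ i, (0 : EuclideanSpace ℝ (Fin 3)) ∉ Metric.closedBall (a i) (r i)) :
    ∃ v : EuclideanSpace ℝ (Fin 3), v ≠ 0 ∧
      ∀ (t : ℝ) (i : Fin 2), t • v ∉ Metric.closedBall (a i) (r i) :=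
  exists_line_disjoint_closedBalls a r (by simp) h0

/-- Two non-overlapping closed balls with centers on a prolate ellipsoid,
neither containing the origin, do not generate the shadow at the origin. -/
theorem two_closed_balls_no_shadow_at_ellipsoid_center
    (d : ℝ) (hd : 1 < d)
    (a : Fin 2 → EuclideanSpace ℝ (Fin 3)) (r : Fin 2 → ℝ)
    (ha : ∀ i, (a i 0) ^ 2 / d ^ 2 + (a i 1) ^ 2 + (a i 2) ^ 2 = 1)
    (hsep : ∀ i j, i ≠ j → r i + r j ≤ dist (a i) (a j))
    (h0 : ∀ i, (0 : EuclideanSpace ℝ (Fin 3)) ∉ Metric.closedBall (a i) (r i)) :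
    ∃ v : EuclideanSpace ℝ (Fin 3), v ≠ 0 ∧
      ∀ (t : ℝ) (i : Fin 2), t • v ∉ Metric.closedBall (a i) (r i) :=
  two_closed_balls_no_shadow_at_ellipsoid_center_general a r h0
end

section
/- Let a be a nonzero vector in Euclidean 3-space and let r be a real number with 0 < r < ‖a‖. For every unit vector v, the line {t • v : t ∈ ℝ} through the origin intersects the closed ball of center a and radius r if and only if ⟨a, v⟩² ≥ ‖a‖² − r². (Thus the set of directions hitting the ball is exactly the double-napped cone under the ball with vertex at the origin.) -/
open Metric RealInnerProductSpace

/-- A line through the origin with unit direction `v` meets the closed ball of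
center `a` and radius `r < ‖a‖` iff `⟨a, v⟩² ≥ ‖a‖² − r²` (the cone under the ball). -/
theorem line_meets_closedBall_iff_cone
    (a : EuclideanSpace ℝ (Fin 3)) (ha : a ≠ 0) (r : ℝ) (hr0 : 0 < r) (hr : r < ‖a‖)
    (v : EuclideanSpace ℝ (Fin 3)) (hv : ‖v‖ = 1) :
    (∃ t : ℝ, t • v ∈ Metric.closedBall a r) ↔ ‖a‖ ^ 2 - r ^ 2 ≤ ⟪a, v⟫ ^ 2 := by
  have key : ∀ t : ℝ, ‖t • v - a‖ ^ 2 = t ^ 2 - 2 * t * ⟪a, v⟫ + ‖a‖ ^ 2 := by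
    intro t
    rw [norm_sub_sq_real, norm_smul, real_inner_smul_left, real_inner_comm]
    simp [hv, abs_mul_abs_self]
    ring
  constructor
  · rintro ⟨t, ht⟩
    rw [mem_closedBall, dist_eq_norm] at ht
    have h2 : ‖t • v - a‖ ^ 2 ≤ r ^ 2 := by
      have := norm_nonneg (t • v - a)
      nlinarith
    rw [key t] at h2
    nlinarith [sq_nonneg (t - ⟪a, v⟫)]
  · intro h
    refine ⟨⟪a, v⟫, ?_⟩
    rw [mem_closedBall, dist_eq_norm]
    have h2 : ‖⟪a, v⟫ • v - a‖ ^ 2 ≤ r ^ 2 := by rw [key]; nlinarith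
    nlinarith [norm_nonneg (⟪a, v⟫ • v - a)]
end

section
/- Let e = (0,0,1) ∈ ℝ³ and let B be the open ball of center b and radius ρ > 0, where ‖b‖ = 1 and B is tangent to the open ball of center e and radius 1, i.e. ‖b − e‖ = 1 + ρ. Then for any two points p, q ∈ B whose third coordinates are zero (i.e. p, q lie in the intersection of B with the equatorial plane), one has ⟨p, q⟩ > 0. (Thus the intersection of B with the equatorial plane is seen from the origin at an angle strictly less than π/2.) -/
open Metric RealInnerProductSpace

/-- The north pole `e = (0,0,1)` of the unit sphere. -/
noncomputable def northPole : EuclideanSpace ℝ (Fin 3) :=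
  WithLp.toLp 2 (fun i => if i = 2 then 1 else 0)

/-!
Let `t = ⟪b, e⟫` be the height of the centre. Tangency gives `2 (1 - t) = (1 + ρ)²`, and the
equatorial section of `B` is the ball of squared radius `ρ² - t²` about the orthogonal
projection `c` of `b` onto `e⊥`, with `‖c‖² = 1 - t²`. The identity
`4 (1 + t² - 2ρ²) = (1 - ρ)² (1 + ρ) (5 + ρ)` shows `‖c‖ ≥ √2 · radius`, so each point of the
section makes an angle less than `π/4` with `c`, and by the triangle inequality for angles any
two of them make an angle less than `π/2`.
-/

namespace InnerProductGeometry

open Real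

variable {V : Type*} [NormedAddCommGroup V] [InnerProductSpace ℝ V]

theorem inner_pos_of_angle_lt_pi_div_two {x y : V} (h : angle x y < π / 2) : 0 < ⟪x, y⟫ := by
  rw [angle, Real.arccos_lt_pi_div_two, div_pos_iff] at h
  rcases h with ⟨hxy, -⟩ | ⟨-, hneg⟩
  · exact hxy
  · exact absurd hneg (not_lt.2 (by positivity))

theorem angle_lt_pi_div_four_of_norm_sub_lt {c p : V} {r : ℝ} (hc : 2 * r ^ 2 ≤ ‖c‖ ^ 2)
    (hp : ‖p - c‖ < r) : angle p c < π / 4 := by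
  have hp2 : ‖p - c‖ ^ 2 < r ^ 2 := pow_lt_pow_left₀ hp (norm_nonneg _) two_ne_zero
  rw [norm_sub_sq_real] at hp2
  have hsqrt : √2 ^ 2 = 2 := Real.sq_sqrt zero_le_two
  -- AM-GM: `√2 ‖p‖ ‖c‖ ≤ ‖p‖² + ‖c‖² / 2 < 2 ⟪p, c⟫`
  have hkey : √2 * (‖p‖ * ‖c‖) < 2 * ⟪p, c⟫ := by
    nlinarith [sq_nonneg (√2 * ‖p‖ - ‖c‖)]
  have hpos : 0 < ‖p‖ * ‖c‖ := by
    nlinarith [real_inner_le_norm p c, Real.sqrt_nonneg 2,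
      mul_nonneg (norm_nonneg p) (norm_nonneg c)]
  by_contra! hle
  have hcos := Real.cos_le_cos_of_nonneg_of_le_pi (by positivity) (angle_le_pi p c) hle
  rw [cos_angle, Real.cos_pi_div_four, div_le_iff₀ hpos] at hcos
  linarith

theorem inner_pos_of_mem_ball_of_two_mul_sq_le {c p q : V} {r : ℝ} (hc : 2 * r ^ 2 ≤ ‖c‖ ^ 2)
    (hp : p ∈ ball c r) (hq : q ∈ ball c r) : 0 < ⟪p, q⟫ := by
  rw [mem_ball, dist_eq_norm] at hp hq
  have hpc := angle_lt_pi_div_four_of_norm_sub_lt hc hp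
  have hqc := angle_lt_pi_div_four_of_norm_sub_lt hc hq
  apply inner_pos_of_angle_lt_pi_div_two
  calc angle p q ≤ angle p c + angle c q := angle_le_angle_add_angle p c q
    _ < π / 4 + π / 4 := by rw [angle_comm c q]; exact add_lt_add hpc hqc
    _ = π / 2 := by ring

end InnerProductGeometry

section Tangency

variable {V : Type*} [NormedAddCommGroup V] [InnerProductSpace ℝ V]

theorem norm_sub_sq_eq_norm_sub_sub_smul_sq_add {e p : V} (he : ‖e‖ = 1) (hp : ⟪p, e⟫ = 0)
    (b : V) : ‖p - b‖ ^ 2 = ‖p - (b - ⟪b, e⟫ • e)‖ ^ 2 + ⟪b, e⟫ ^ 2 := by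
  have horth : ⟪p - (b - ⟪b, e⟫ • e), e⟫ = 0 := by
    rw [inner_sub_left, inner_sub_left, real_inner_smul_left, real_inner_self_eq_norm_sq, he, hp]
    ring
  have hsplit : p - b = (p - (b - ⟪b, e⟫ • e)) - ⟪b, e⟫ • e := by abel
  rw [hsplit, norm_sub_sq_real, real_inner_smul_right, horth, norm_smul, he,
    Real.norm_eq_abs, mul_one, sq_abs]
  ring

theorem two_mul_sq_le_one_add_sq_of_tangent {t ρ : ℝ} (hρ : -1 ≤ ρ)
    (ht : 2 * (1 - t) = (1 + ρ) ^ 2) : 2 * ρ ^ 2 ≤ 1 + t ^ 2 := by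
  have ht' : t = (1 - 2 * ρ - ρ ^ 2) / 2 := by linarith
  have hfactor : 4 * (1 + t ^ 2 - 2 * ρ ^ 2) = (1 - ρ) ^ 2 * (1 + ρ) * (5 + ρ) := by
    rw [ht']; ring
  nlinarith [mul_nonneg (mul_nonneg (sq_nonneg (1 - ρ)) (by linarith : 0 ≤ 1 + ρ))
    (by linarith : 0 ≤ 5 + ρ)]

theorem inner_pos_of_mem_ball_of_inner_eq_zero_of_tangent {e b p q : V} {ρ : ℝ}
    (he : ‖e‖ = 1) (hb : ‖b‖ = 1) (htan : ‖b - e‖ = 1 + ρ)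
    (hp : p ∈ ball b ρ) (hq : q ∈ ball b ρ) (hpe : ⟪p, e⟫ = 0) (hqe : ⟪q, e⟫ = 0) :
    0 < ⟪p, q⟫ := by
  set t := ⟪b, e⟫
  set c := b - t • e
  have hρ : 0 < ρ := pos_of_mem_ball hp
  have hc : ‖c‖ ^ 2 = 1 - t ^ 2 := by
    have h := norm_sub_sq_eq_norm_sub_sub_smul_sq_add he (inner_zero_left e) b
    rw [zero_sub, zero_sub, norm_neg, norm_neg, hb] at h
    linarith
  have ht : 2 * (1 - t) = (1 + ρ) ^ 2 := by
    rw [← htan, norm_sub_sq_real, hb, he]; ring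
  have hsection : ∀ x, x ∈ ball b ρ → ⟪x, e⟫ = 0 → ‖x - c‖ ^ 2 < ρ ^ 2 - t ^ 2 := by
    intro x hx hxe
    rw [mem_ball, dist_eq_norm] at hx
    have := pow_lt_pow_left₀ hx (norm_nonneg _) two_ne_zero
    rw [norm_sub_sq_eq_norm_sub_sub_smul_sq_add he hxe b] at this
    linarith
  have hr : √(ρ ^ 2 - t ^ 2) ^ 2 = ρ ^ 2 - t ^ 2 :=
    Real.sq_sqrt (by linarith [sq_nonneg ‖p - c‖, hsection p hp hpe])
  have hmem : ∀ x, x ∈ ball b ρ → ⟪x, e⟫ = 0 → x ∈ ball c √(ρ ^ 2 - t ^ 2) := by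
    intro x hx hxe
    rw [mem_ball, dist_eq_norm, Real.lt_sqrt (norm_nonneg _)]
    exact hsection x hx hxe
  refine InnerProductGeometry.inner_pos_of_mem_ball_of_two_mul_sq_le ?_ (hmem p hp hpe)
    (hmem q hq hqe)
  rw [hr, hc]
  linarith [two_mul_sq_le_one_add_sq_of_tangent (by linarith) ht]

end Tangency

theorem norm_northPole : ‖northPole‖ = 1 := by
  simp [EuclideanSpace.norm_eq, northPole]

theorem inner_northPole (x : EuclideanSpace ℝ (Fin 3)) : ⟪x, northPole⟫ = x 2 := by
  simp [PiLp.inner_apply, northPole]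

theorem equatorial_intersection_angle_lt_pi_div_two_general
    (b : EuclideanSpace ℝ (Fin 3)) (ρ : ℝ) (hb : ‖b‖ = 1)
    (htan : ‖b - northPole‖ = 1 + ρ)
    (p q : EuclideanSpace ℝ (Fin 3))
    (hp : p ∈ Metric.ball b ρ) (hq : q ∈ Metric.ball b ρ)
    (hp2 : p 2 = 0) (hq2 : q 2 = 0) :
    0 < ⟪p, q⟫ :=
  inner_pos_of_mem_ball_of_inner_eq_zero_of_tangent norm_northPole hb htan hp hq
    (by rw [inner_northPole, hp2]) (by rw [inner_northPole, hq2])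

/-- If an open ball `B` of center `b` (on the unit sphere) and radius `ρ` is tangent
to the open unit ball centered at `e = (0,0,1)`, then any two points of `B` lying
in the equatorial plane have positive inner product: the intersection of `B` with
the equatorial plane is seen from the origin at an angle less than `π/2`. -/
theorem equatorial_intersection_angle_lt_pi_div_two
    (b : EuclideanSpace ℝ (Fin 3)) (ρ : ℝ) (hρ : 0 < ρ) (hb : ‖b‖ = 1)
    (htan : ‖b - northPole‖ = 1 + ρ)
    (p q : EuclideanSpace ℝ (Fin 3))
    (hp : p ∈ Metric.ball b ρ) (hq : q ∈ Metric.ball b ρ)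
    (hp2 : p 2 = 0) (hq2 : q 2 = 0) :
    0 < ⟪p, q⟫ :=
  equatorial_intersection_angle_lt_pi_div_two_general b ρ hb htan p q hp hq hp2 hq2
end

section
/- There exist a real number d > 1 and three open balls in Euclidean 3-space with centers on the prolate ellipsoid E_d = {p : (p 0)²/d² + (p 1)² + (p 2)² = 1}, which are pairwise non-overlapping (distance between centers at least the sum of radii), none of which contains the origin, and which generate the shadow at the origin: every line through the origin intersects at least one of the three balls. -/
open Metric RealInnerProductSpace

/-!
Take `d = 20` and the balls `B((20,0,0), 37/2)`, `B((0,1,0), 1)`, `B((0,0,1), 41/100)`.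
A line `ℝ v` meets `B(a, r)` iff its distance to `a` is less than `r`, i.e.
`(‖a‖² - r²) ‖v‖² < ⟪a, v⟫²`. The ball about `(0,1,0)` has the origin on its boundary and is
tangent there to the plane `v 1 = 0`, so it meets every line off that plane. Inside the plane,
the other two balls subtend cones of half-angles `arcsin (37/40) ≈ 67.7°` about the first axis
and `arcsin (41/100) ≈ 24.2°` about the third; these add up to more than `90°`.
-/

section InnerProductSpace

variable {E : Type*} [NormedAddCommGroup E] [InnerProductSpace ℝ E]

theorem exists_smul_mem_ball_of_sq_lt_inner_sq {a v : E} {r : ℝ} (hr : 0 < r) (hv : v ≠ 0)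
    (h : (‖a‖ ^ 2 - r ^ 2) * ‖v‖ ^ 2 < ⟪a, v⟫ ^ 2) : ∃ t : ℝ, t • v ∈ ball a r := by
  have hv2 : 0 < ‖v‖ ^ 2 := by positivity
  refine ⟨⟪a, v⟫ / ‖v‖ ^ 2, ?_⟩
  rw [mem_ball, dist_eq_norm]
  -- `t v` with this `t` is the orthogonal projection of `a` onto `ℝ v`
  have hfoot : ‖(⟪a, v⟫ / ‖v‖ ^ 2) • v - a‖ ^ 2 = ‖a‖ ^ 2 - ⟪a, v⟫ ^ 2 / ‖v‖ ^ 2 := by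
    rw [norm_sub_sq_real, norm_smul, real_inner_smul_left, real_inner_comm, Real.norm_eq_abs,
      mul_pow, sq_abs]
    field_simp
    ring
  refine lt_of_pow_lt_pow_left₀ 2 hr.le ?_
  rw [hfoot, sub_lt_comm, lt_div_iff₀ hv2]
  linarith

end InnerProductSpace

namespace EuclideanSpace

variable {ι : Type*} [Fintype ι] [DecidableEq ι]

theorem dist_single_single_of_ne {i j : ι} (hij : i ≠ j) (a b : ℝ) :
    dist (single i a) (single j b) = √(a ^ 2 + b ^ 2) := by
  rw [dist_eq_norm, ← Real.sqrt_sq (norm_nonneg _), norm_sub_sq_real, inner_single_left]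
  simp [hij.symm]

theorem exists_smul_mem_ball_single (i : ι) {c r : ℝ} (hr : 0 < r) {v : EuclideanSpace ℝ ι}
    (hv : v ≠ 0) (h : (c ^ 2 - r ^ 2) * ‖v‖ ^ 2 < c ^ 2 * v i ^ 2) :
    ∃ t : ℝ, t • v ∈ ball (single i c) r := by
  refine exists_smul_mem_ball_of_sq_lt_inner_sq hr hv ?_
  simpa [inner_single_left, mul_pow] using h

end EuclideanSpace

theorem three_axis_cones_cover {v : EuclideanSpace ℝ (Fin 3)} (hv : v ≠ 0) :
    (20 ^ 2 - (37 / 2) ^ 2) * ‖v‖ ^ 2 < 20 ^ 2 * v 0 ^ 2 ∨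
      (1 ^ 2 - 1 ^ 2) * ‖v‖ ^ 2 < 1 ^ 2 * v 1 ^ 2 ∨
      (1 ^ 2 - (41 / 100) ^ 2) * ‖v‖ ^ 2 < 1 ^ 2 * v 2 ^ 2 := by
  have hnorm : ‖v‖ ^ 2 = v 0 ^ 2 + v 1 ^ 2 + v 2 ^ 2 := by
    rw [EuclideanSpace.real_norm_sq_eq, Fin.sum_univ_three]
  have hpos : 0 < ‖v‖ ^ 2 := by positivity
  rw [hnorm] at hpos ⊢
  by_contra! h
  obtain ⟨h0, h1, h2⟩ := h
  linarith [sq_nonneg (v 0), sq_nonneg (v 2)]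

/-- There exist a prolate ellipsoid and three pairwise non-overlapping open balls
with centers on it, none containing the origin, generating the shadow at the origin. -/
theorem exists_ellipsoid_three_open_balls_shadow :
    ∃ (d : ℝ), 1 < d ∧
      ∃ (a : Fin 3 → EuclideanSpace ℝ (Fin 3)) (r : Fin 3 → ℝ),
        (∀ i, (a i 0) ^ 2 / d ^ 2 + (a i 1) ^ 2 + (a i 2) ^ 2 = 1) ∧
        (∀ i, 0 < r i) ∧
        (∀ i j, i ≠ j → r i + r j ≤ dist (a i) (a j)) ∧
        (∀ i, (0 : EuclideanSpace ℝ (Fin 3)) ∉ Metric.ball (a i) (r i)) ∧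
        (∀ v : EuclideanSpace ℝ (Fin 3), v ≠ 0 →
          ∃ (i : Fin 3) (t : ℝ), t • v ∈ Metric.ball (a i) (r i)) := by
  set c : Fin 3 → ℝ := ![20, 1, 1]
  set r : Fin 3 → ℝ := ![37 / 2, 1, 41 / 100]
  have hr_pos : ∀ i, 0 < r i := by
    intro i; fin_cases i <;> norm_num [r]
  refine ⟨20, by norm_num, fun i => EuclideanSpace.single i (c i), r, ?_, hr_pos, ?_, ?_, ?_⟩
  · intro i; fin_cases i <;> norm_num [c, Fin.ext_iff]
  · intro i j hij
    rw [EuclideanSpace.dist_single_single_of_ne hij]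
    apply Real.le_sqrt_of_sq_le
    fin_cases i <;> fin_cases j <;> first | exact absurd rfl hij | norm_num [c, r]
  · intro i
    fin_cases i <;> norm_num [c, r]
  · intro v hv
    rcases three_axis_cones_cover hv with h | h | h
    · exact ⟨0, EuclideanSpace.exists_smul_mem_ball_single 0 (hr_pos 0) hv h⟩
    · exact ⟨1, EuclideanSpace.exists_smul_mem_ball_single 1 (hr_pos 1) hv h⟩
    · exact ⟨2, EuclideanSpace.exists_smul_mem_ball_single 2 (hr_pos 2) hv h⟩
end

section
/- There exist a real number d > 1 and three closed balls in Euclidean 3-space with centers on the prolate ellipsoid E_d = {p : (p 0)²/d² + (p 1)² + (p 2)² = 1}, which are pairwise non-overlapping (distance between centers at least the sum of radii), none of which contains the origin, and which generate the shadow at the origin: every line through the origin intersects at least one of the three balls. -/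
open Metric

noncomputable def myPt (x y z : ℝ) : EuclideanSpace ℝ (Fin 3) :=
  (WithLp.equiv 2 (Fin 3 → ℝ)).symm ![x, y, z]

@[simp] lemma myPt_0 (x y z : ℝ) : myPt x y z 0 = x := rfl
@[simp] lemma myPt_1 (x y z : ℝ) : myPt x y z 1 = y := rfl
@[simp] lemma myPt_2 (x y z : ℝ) : myPt x y z 2 = z := rfl

lemma myDist (x y z x' y' z' : ℝ) :
    dist (myPt x y z) (myPt x' y' z') =
      Real.sqrt ((x - x')^2 + (y - y')^2 + (z - z')^2) := by
  rw [EuclideanSpace.dist_eq, Fin.sum_univ_three]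
  simp [Real.dist_eq, sq_abs]

lemma sqrt_ge_of_sq (s r : ℝ) (hr : 0 ≤ r) (h : r^2 ≤ s) : r ≤ Real.sqrt s := by
  calc r = Real.sqrt (r^2) := (Real.sqrt_sq hr).symm
  _ ≤ _ := Real.sqrt_le_sqrt h

lemma mem_ball_of_sq (p : EuclideanSpace ℝ (Fin 3)) (x y z r : ℝ) (hr : 0 ≤ r)
    (h : (p 0 - x)^2 + (p 1 - y)^2 + (p 2 - z)^2 ≤ r^2) :
    p ∈ Metric.closedBall (myPt x y z) r := by
  rw [mem_closedBall, EuclideanSpace.dist_eq, Fin.sum_univ_three]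
  calc Real.sqrt (dist (p 0) (myPt x y z 0) ^ 2 + dist (p 1) (myPt x y z 1) ^ 2
        + dist (p 2) (myPt x y z 2) ^ 2) ≤ Real.sqrt (r^2) := by
        apply Real.sqrt_le_sqrt
        simpa [Real.dist_eq, sq_abs] using h
  _ = r := Real.sqrt_sq hr

/-- There exist a prolate ellipsoid and three pairwise non-overlapping closed balls
with centers on it, none containing the origin, generating the shadow at the origin. -/
theorem exists_ellipsoid_three_closed_balls_shadow :
    ∃ (d : ℝ), 1 < d ∧
      ∃ (a : Fin 3 → EuclideanSpace ℝ (Fin 3)) (r : Fin 3 → ℝ),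
        (∀ i, (a i 0) ^ 2 / d ^ 2 + (a i 1) ^ 2 + (a i 2) ^ 2 = 1) ∧
        (∀ i, 0 < r i) ∧
        (∀ i j, i ≠ j → r i + r j ≤ dist (a i) (a j)) ∧
        (∀ i, (0 : EuclideanSpace ℝ (Fin 3)) ∉ Metric.closedBall (a i) (r i)) ∧
        (∀ v : EuclideanSpace ℝ (Fin 3), v ≠ 0 →
          ∃ (i : Fin 3) (t : ℝ), t • v ∈ Metric.closedBall (a i) (r i)) := by
  refine ⟨100, by norm_num,
    ![myPt 100 0 0, myPt 0 1 0, myPt 0 0 1], ![99, 9/10, 1/2],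
    ?_, ?_, ?_, ?_, ?_⟩
  · intro i; fin_cases i <;> norm_num
  · intro i; fin_cases i <;> norm_num
  · intro i j hij
    fin_cases i <;> fin_cases j <;> simp_all <;> rw [myDist] <;>
      apply sqrt_ge_of_sq _ _ (by norm_num) <;> norm_num
  · intro i
    have h0 : (0 : EuclideanSpace ℝ (Fin 3)) = myPt 0 0 0 := by ext j; fin_cases j <;> rfl
    have s1 : Real.sqrt (((0:ℝ) - 100)^2 + ((0:ℝ) - 0)^2 + ((0:ℝ) - 0)^2) = 100 := by
      rw [show (((0:ℝ) - 100)^2 + ((0:ℝ) - 0)^2 + ((0:ℝ) - 0)^2 : ℝ) = 100^2 by norm_num,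
        Real.sqrt_sq (by norm_num)]
    have s2 : Real.sqrt (((0:ℝ) - 0)^2 + ((0:ℝ) - 1)^2 + ((0:ℝ) - 0)^2) = 1 := by
      rw [show (((0:ℝ) - 0)^2 + ((0:ℝ) - 1)^2 + ((0:ℝ) - 0)^2 : ℝ) = 1^2 by norm_num,
        Real.sqrt_sq (by norm_num)]
    have s3 : Real.sqrt (((0:ℝ) - 0)^2 + ((0:ℝ) - 0)^2 + ((0:ℝ) - 1)^2) = 1 := by
      rw [show (((0:ℝ) - 0)^2 + ((0:ℝ) - 0)^2 + ((0:ℝ) - 1)^2 : ℝ) = 1^2 by norm_num,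
        Real.sqrt_sq (by norm_num)]
    have nm1 : (0 : EuclideanSpace ℝ (Fin 3)) ∉ Metric.closedBall (myPt 100 0 0) (99:ℝ) := by
      rw [h0, mem_closedBall, myDist, s1]; norm_num
    have nm2 : (0 : EuclideanSpace ℝ (Fin 3)) ∉ Metric.closedBall (myPt 0 1 0) ((9:ℝ)/10) := by
      rw [h0, mem_closedBall, myDist, s2]; norm_num
    have nm3 : (0 : EuclideanSpace ℝ (Fin 3)) ∉ Metric.closedBall (myPt 0 0 1) ((1:ℝ)/2) := by
      rw [h0, mem_closedBall, myDist, s3]; norm_num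
    fin_cases i
    · exact nm1
    · exact nm2
    · exact nm3
  · intro v hv
    set x := v 0 with hx
    set y := v 1 with hy
    set z := v 2 with hz
    set N := x^2 + y^2 + z^2 with hN
    have hN0 : 0 < N := by
      rcases lt_or_eq_of_le (by positivity : (0:ℝ) ≤ N) with h | h
      · exact h
      · exfalso; apply hv
        have hx0 : x = 0 := by nlinarith
        have hy0 : y = 0 := by nlinarith
        have hz0 : z = 0 := by nlinarith
        ext j; fin_cases j <;> simpa using by assumption
    by_cases h1 : 199 * N ≤ 10000 * x^2
    · refine ⟨0, 100 * x / N, ?_⟩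
      show _ ∈ Metric.closedBall (myPt 100 0 0) (99:ℝ)
      apply mem_ball_of_sq _ _ _ _ _ (by norm_num)
      simp only [PiLp.smul_apply, smul_eq_mul, ← hx, ← hy, ← hz]
      have key : (100*x/N * x - 100)^2 + (100*x/N * y - 0)^2 + (100*x/N * z - 0)^2
          = 10000 - 10000 * x^2 / N := by
        field_simp
        ring
      rw [key]
      have h199 : (199 : ℝ) ≤ 10000 * x^2 / N := by rw [le_div_iff₀ hN0]; linarith
      nlinarith
    · by_cases h2 : 19 * N ≤ 100 * y^2
      · refine ⟨1, y / N, ?_⟩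
        show _ ∈ Metric.closedBall (myPt 0 1 0) ((9:ℝ)/10)
        apply mem_ball_of_sq _ _ _ _ _ (by norm_num)
        simp only [PiLp.smul_apply, smul_eq_mul, ← hx, ← hy, ← hz]
        have key : (y/N * x - 0)^2 + (y/N * y - 1)^2 + (y/N * z - 0)^2
            = 1 - y^2 / N := by
          field_simp
          ring
        rw [key]
        have : 19/100 ≤ y^2 / N := by
          rw [le_div_iff₀ hN0]; linarith
        linarith
      · refine ⟨2, z / N, ?_⟩
        show _ ∈ Metric.closedBall (myPt 0 0 1) ((1:ℝ)/2)
        apply mem_ball_of_sq _ _ _ _ _ (by norm_num)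
        simp only [PiLp.smul_apply, smul_eq_mul, ← hx, ← hy, ← hz]
        have key : (z/N * x - 0)^2 + (z/N * y - 0)^2 + (z/N * z - 1)^2
            = 1 - z^2 / N := by
          field_simp
          ring
        rw [key]
        have hz2 : z^2 = N - x^2 - y^2 := by rw [hN]; ring
        have : 3/4 ≤ z^2 / N := by
          rw [le_div_iff₀ hN0]; push_neg at h1 h2; nlinarith
        linarith
end

section
/- For every real number d > 2√2 there exist three closed balls in Euclidean 3-space with centers on the prolate ellipsoid E_d = {p : (p 0)²/d² + (p 1)² + (p 2)² = 1}, pairwise non-overlapping (distance between centers at least the sum of radii), none containing the origin, which generate the shadow at the origin: every line through the origin intersects at least one of the three balls. -/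
/-!
A line `ℝ • v` meets `closedBall c r` as soon as `(‖c‖² - r²) ‖v‖² ≤ ⟪c, v⟫²`, the condition that
the foot of the perpendicular from `c` lies in the ball. The ball of radius `√(d² + 1) - 1` about
the vertex `(d, 0, 0)` therefore meets every line with `x² ≥ (1 - ρ) ‖v‖²`, where
`ρ = (√(d² + 1) - 1)² / d²`, and `ρ > 1/2` exactly when `d > 2√2`.

The other two balls are centred on the unit circle of the `yz`-plane, at
`(0, 1 - t², 2t) / (1 + t²)` and `(0, -1, 0)`, with radii `1 - t²` and `1 - t⁶`. A line missed
by both has `y² < 2t⁶ ‖v‖²` and `((1 - t²) y + 2t z)² < 2t² (1 + t²)² ‖v‖²`; eliminating `y` by a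
weighted Cauchy–Schwarz inequality gives `y² + z² < missedFraction t * ‖v‖²`, and
`missedFraction t → 1/2` as `t → 0`. For `t` with `missedFraction t < ρ`, no line escapes all
three balls.
-/

open Metric Filter Topology

lemma exists_smul_mem_closedBall_of_sq_le {E : Type*} [NormedAddCommGroup E]
    [InnerProductSpace ℝ E] {c v : E} {r : ℝ} (hv : v ≠ 0) (hr : 0 ≤ r)
    (h : (‖c‖ ^ 2 - r ^ 2) * ‖v‖ ^ 2 ≤ inner ℝ c v ^ 2) :
    ∃ t : ℝ, t • v ∈ closedBall c r := by
  have hv2 : 0 < ‖v‖ ^ 2 := by positivity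
  refine ⟨inner ℝ c v / ‖v‖ ^ 2, mem_closedBall.2 (le_of_pow_le_pow_left₀ two_ne_zero hr ?_)⟩
  have hfoot : ‖(inner ℝ c v / ‖v‖ ^ 2) • v - c‖ ^ 2
      = ‖c‖ ^ 2 - inner ℝ c v ^ 2 / ‖v‖ ^ 2 := by
    rw [norm_sub_sq_real, norm_smul, real_inner_smul_left, real_inner_comm, Real.norm_eq_abs,
      mul_pow, sq_abs]
    field_simp
    ring
  rw [dist_eq_norm, hfoot, sub_le_comm]
  exact (le_div_iff₀ hv2).2 h

lemma EuclideanSpace.real_norm_sq_eq_fin_three (p : EuclideanSpace ℝ (Fin 3)) :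
    ‖p‖ ^ 2 = p 0 ^ 2 + p 1 ^ 2 + p 2 ^ 2 := by
  simp [EuclideanSpace.real_norm_sq_eq, Fin.sum_univ_three]

lemma EuclideanSpace.real_inner_eq_fin_three (p q : EuclideanSpace ℝ (Fin 3)) :
    inner ℝ p q = p 0 * q 0 + p 1 * q 1 + p 2 * q 2 := by
  simp [PiLp.inner_apply, Fin.sum_univ_three, mul_comm]

lemma EuclideanSpace.dist_eq_fin_three (p q : EuclideanSpace ℝ (Fin 3)) :
    dist p q = √((p 0 - q 0) ^ 2 + (p 1 - q 1) ^ 2 + (p 2 - q 2) ^ 2) := by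
  simp [EuclideanSpace.dist_eq, Fin.sum_univ_three, Real.dist_eq]

lemma tilt_sq_add_sq (t : ℝ) :
    ((1 - t ^ 2) / (1 + t ^ 2)) ^ 2 + (2 * t / (1 + t ^ 2)) ^ 2 = 1 := by
  field_simp
  ring

noncomputable def missedFraction (t : ℝ) : ℝ := 2 * t ^ 6 + (1 + t ^ 2) ^ 4 / 2

lemma sq_add_sq_lt_missedFraction_mul {t y z W : ℝ} (ht : 0 < t) (hy : y ^ 2 < 2 * t ^ 6 * W)
    (hA : ((1 - t ^ 2) * y + 2 * t * z) ^ 2 < 2 * t ^ 2 * (1 + t ^ 2) ^ 2 * W) :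
    y ^ 2 + z ^ 2 < missedFraction t * W := by
  set A := (1 - t ^ 2) * y + 2 * t * z
  have hy' : ((1 - t ^ 2) * y) ^ 2 ≤ (1 + t ^ 2) ^ 2 * (2 * t ^ 6 * W) := by
    rw [mul_pow]
    exact mul_le_mul (by nlinarith) hy.le (sq_nonneg y) (sq_nonneg _)
  have hz : 4 * t ^ 4 * z ^ 2 < 4 * t ^ 4 * ((1 + t ^ 2) ^ 4 / 2 * W) :=
    calc 4 * t ^ 4 * z ^ 2 = t ^ 2 * (A - (1 - t ^ 2) * y) ^ 2 := by ring
      _ ≤ t ^ 2 * (1 + t ^ 2) * A ^ 2 + (1 + t ^ 2) * ((1 - t ^ 2) * y) ^ 2 := by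
        nlinarith [sq_nonneg (t ^ 2 * A + (1 - t ^ 2) * y)]
      _ < t ^ 2 * (1 + t ^ 2) * (2 * t ^ 2 * (1 + t ^ 2) ^ 2 * W)
          + (1 + t ^ 2) * ((1 + t ^ 2) ^ 2 * (2 * t ^ 6 * W)) :=
        add_lt_add_of_lt_of_le (by gcongr) (by gcongr)
      _ = 4 * t ^ 4 * ((1 + t ^ 2) ^ 4 / 2 * W) := by ring
  have hz' := lt_of_mul_lt_mul_left hz (by positivity)
  rw [missedFraction]
  linarith

lemma exists_missedFraction_lt {ρ : ℝ} (hρ : 1 / 2 < ρ) :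
    ∃ t : ℝ, 0 < t ∧ t < 1 ∧ missedFraction t < ρ := by
  have hlim : Tendsto missedFraction (𝓝[>] 0) (𝓝 (1 / 2)) := by
    have h := (by unfold missedFraction; fun_prop : Continuous missedFraction).tendsto 0
    norm_num [missedFraction] at h
    exact h.mono_left nhdsWithin_le_nhds
  have hsmall : ∀ᶠ t in 𝓝[>] (0 : ℝ), t ∈ Set.Ioo 0 1 := Ioo_mem_nhdsGT zero_lt_one
  obtain ⟨t, ⟨ht0, ht1⟩, ht⟩ := (hsmall.and (hlim.eventually_lt_const hρ)).exists
  exact ⟨t, ht0, ht1, ht⟩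

lemma one_lt_sqrt_sq_add_one {d : ℝ} (hd : d ≠ 0) : 1 < √(d ^ 2 + 1) := by
  rw [Real.lt_sqrt zero_le_one]
  have : 0 < d ^ 2 := by positivity
  linarith

lemma one_half_lt_sq_sqrt_sq_add_one_sub_one_div_sq {d : ℝ} (hd : 8 < d ^ 2) :
    1 / 2 < (√(d ^ 2 + 1) - 1) ^ 2 / d ^ 2 := by
  have hK := Real.sq_sqrt (by positivity : 0 ≤ d ^ 2 + 1)
  have hK3 : 3 < √(d ^ 2 + 1) := by rw [Real.lt_sqrt (by norm_num)]; linarith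
  rw [lt_div_iff₀ (by positivity)]
  nlinarith

noncomputable def shadowCenter (d t : ℝ) : Fin 3 → EuclideanSpace ℝ (Fin 3) :=
  ![!₂[0, (1 - t ^ 2) / (1 + t ^ 2), 2 * t / (1 + t ^ 2)], !₂[0, -1, 0], !₂[d, 0, 0]]

noncomputable def shadowRadius (d t : ℝ) : Fin 3 → ℝ :=
  ![1 - t ^ 2, 1 - t ^ 6, √(d ^ 2 + 1) - 1]

section ShadowConfiguration

variable {d t : ℝ}

lemma shadowCenter_mem_ellipsoid (hd : d ≠ 0) (i : Fin 3) :
    (shadowCenter d t i 0) ^ 2 / d ^ 2 + (shadowCenter d t i 1) ^ 2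
      + (shadowCenter d t i 2) ^ 2 = 1 := by
  fin_cases i <;> simp [shadowCenter, hd, tilt_sq_add_sq]

lemma shadowRadius_pos (hd : d ≠ 0) (ht0 : 0 < t) (ht1 : t < 1) (i : Fin 3) :
    0 < shadowRadius d t i := by
  fin_cases i <;> simp only [shadowRadius, Fin.reduceFinMk, Matrix.cons_val] <;> rw [sub_pos]
  · exact pow_lt_one₀ ht0.le ht1 two_ne_zero
  · exact pow_lt_one₀ ht0.le ht1 (by norm_num)
  · exact one_lt_sqrt_sq_add_one hd

lemma zero_notMem_closedBall_shadow (hd : d ≠ 0) (ht0 : 0 < t) (ht1 : t < 1) (i : Fin 3) :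
    (0 : EuclideanSpace ℝ (Fin 3)) ∉ closedBall (shadowCenter d t i) (shadowRadius d t i) := by
  rw [mem_closedBall, dist_zero_left, not_le]
  refine lt_of_pow_lt_pow_left₀ 2 (norm_nonneg _) ?_
  have ht2 : t ^ 2 < 1 := pow_lt_one₀ ht0.le ht1 two_ne_zero
  have ht6 : t ^ 6 < 1 := pow_lt_one₀ ht0.le ht1 (by norm_num)
  rw [EuclideanSpace.real_norm_sq_eq_fin_three]
  fin_cases i <;> simp only [shadowCenter, shadowRadius, Fin.zero_eta, Fin.mk_one,
    Fin.reduceFinMk, Matrix.cons_val]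
  · nlinarith [tilt_sq_add_sq t, pow_pos ht0 2]
  · nlinarith [pow_pos ht0 6]
  · nlinarith [Real.sq_sqrt (by positivity : 0 ≤ d ^ 2 + 1), one_lt_sqrt_sq_add_one hd]

lemma shadowRadius_add_le_dist (hd : d ≠ 0) (ht0 : 0 < t) (ht1 : t < 1) (i j : Fin 3)
    (hij : i ≠ j) :
    shadowRadius d t i + shadowRadius d t j ≤ dist (shadowCenter d t i) (shadowCenter d t j) := by
  wlog hlt : i < j generalizing i j with H
  · rw [add_comm, dist_comm]
    exact H j i hij.symm (lt_of_le_of_ne (not_lt.1 hlt) hij.symm)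
  rw [EuclideanSpace.dist_eq_fin_three,
    Real.le_sqrt' (add_pos (shadowRadius_pos hd ht0 ht1 i) (shadowRadius_pos hd ht0 ht1 j))]
  have hK := Real.sq_sqrt (by positivity : 0 ≤ d ^ 2 + 1)
  have hK1 := one_lt_sqrt_sq_add_one hd
  have ht2 : t ^ 2 < 1 := pow_lt_one₀ ht0.le ht1 two_ne_zero
  have ht6 : t ^ 6 < 1 := pow_lt_one₀ ht0.le ht1 (by norm_num)
  fin_cases i <;> fin_cases j <;> simp only [shadowCenter, shadowRadius, Fin.zero_eta,
    Fin.mk_one, Fin.reduceFinMk, Matrix.cons_val] <;> try simp at hlt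
  · have hdist : (0 - 0) ^ 2 + ((1 - t ^ 2) / (1 + t ^ 2) - -1) ^ 2
        + (2 * t / (1 + t ^ 2) - 0) ^ 2 = 4 / (1 + t ^ 2) := by
      field_simp; ring
    have hsum : (1 - t ^ 2 + (1 - t ^ 6)) ^ 2 ≤ (2 - t ^ 2) ^ 2 := by nlinarith [pow_pos ht0 6]
    rw [hdist, le_div_iff₀ (by positivity)]
    nlinarith [mul_le_mul_of_nonneg_right hsum (by positivity : (0 : ℝ) ≤ 1 + t ^ 2),
      pow_pos ht0 2, pow_pos ht0 4]
  · nlinarith [tilt_sq_add_sq t, pow_pos ht0 2]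
  · nlinarith [pow_pos ht0 6]

lemma exists_smul_mem_closedBall_shadow (hd : d ≠ 0) (ht0 : 0 < t) (ht1 : t < 1)
    (ht : missedFraction t < (√(d ^ 2 + 1) - 1) ^ 2 / d ^ 2)
    {v : EuclideanSpace ℝ (Fin 3)} (hv : v ≠ 0) :
    ∃ (i : Fin 3) (s : ℝ), s • v ∈ closedBall (shadowCenter d t i) (shadowRadius d t i) := by
  suffices ∃ i, (‖shadowCenter d t i‖ ^ 2 - shadowRadius d t i ^ 2) * ‖v‖ ^ 2
      ≤ inner ℝ (shadowCenter d t i) v ^ 2 by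
    obtain ⟨i, hi⟩ := this
    exact ⟨i, exists_smul_mem_closedBall_of_sq_le hv (shadowRadius_pos hd ht0 ht1 i).le hi⟩
  by_contra! hnot
  have hV : 0 < ‖v‖ ^ 2 := by positivity
  simp only [EuclideanSpace.real_norm_sq_eq_fin_three, EuclideanSpace.real_inner_eq_fin_three]
    at hnot hV
  set V := v 0 ^ 2 + v 1 ^ 2 + v 2 ^ 2
  have h0 : ((1 - t ^ 2) / (1 + t ^ 2) * v 1 + 2 * t / (1 + t ^ 2) * v 2) ^ 2
      < (1 - (1 - t ^ 2) ^ 2) * V := by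
    simpa [shadowCenter, shadowRadius, tilt_sq_add_sq] using hnot 0
  have h1 : v 1 ^ 2 < (1 - (1 - t ^ 6) ^ 2) * V := by
    simpa [shadowCenter, shadowRadius] using hnot 1
  have h2 : d ^ 2 * v 0 ^ 2 < (d ^ 2 - (√(d ^ 2 + 1) - 1) ^ 2) * V := by
    simpa [shadowCenter, shadowRadius, mul_pow] using hnot 2
  have hy : v 1 ^ 2 < 2 * t ^ 6 * V :=
    h1.trans_le (mul_le_mul_of_nonneg_right (by nlinarith [pow_pos ht0 12]) hV.le)
  have hA : ((1 - t ^ 2) * v 1 + 2 * t * v 2) ^ 2 < 2 * t ^ 2 * (1 + t ^ 2) ^ 2 * V := by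
    have hscale : (1 - t ^ 2) * v 1 + 2 * t * v 2
        = (1 + t ^ 2) * ((1 - t ^ 2) / (1 + t ^ 2) * v 1 + 2 * t / (1 + t ^ 2) * v 2) := by
      field_simp
    rw [hscale, mul_pow]
    calc _ < (1 + t ^ 2) ^ 2 * ((1 - (1 - t ^ 2) ^ 2) * V) := by gcongr
      _ ≤ 2 * t ^ 2 * (1 + t ^ 2) ^ 2 * V := by nlinarith [pow_pos ht0 4]
  have hyz := mul_lt_mul_of_pos_left (sq_add_sq_lt_missedFraction_mul ht0 hy hA)
    (by positivity : 0 < d ^ 2)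
  have hρ := mul_lt_mul_of_pos_right ((lt_div_iff₀ (by positivity)).1 ht) hV
  linarith

end ShadowConfiguration

/-- For every `d > 2√2` there are three pairwise non-overlapping closed balls with
centers on the prolate ellipsoid with semi-axes `d, 1, 1`, none containing the origin,
which generate the shadow at the origin. -/
theorem shadow_three_closed_balls_of_ratio_gt
    (d : ℝ) (hd : 2 * Real.sqrt 2 < d) :
    ∃ (a : Fin 3 → EuclideanSpace ℝ (Fin 3)) (r : Fin 3 → ℝ),
      (∀ i, (a i 0) ^ 2 / d ^ 2 + (a i 1) ^ 2 + (a i 2) ^ 2 = 1) ∧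
      (∀ i, 0 < r i) ∧
      (∀ i j, i ≠ j → r i + r j ≤ dist (a i) (a j)) ∧
      (∀ i, (0 : EuclideanSpace ℝ (Fin 3)) ∉ Metric.closedBall (a i) (r i)) ∧
      (∀ v : EuclideanSpace ℝ (Fin 3), v ≠ 0 →
        ∃ (i : Fin 3) (t : ℝ), t • v ∈ Metric.closedBall (a i) (r i)) := by
  have hd0 : d ≠ 0 := (lt_trans (by positivity) hd).ne'
  have hd8 : 8 < d ^ 2 := by
    nlinarith [Real.sq_sqrt (zero_le_two : (0 : ℝ) ≤ 2), Real.sqrt_nonneg 2]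
  obtain ⟨t, ht0, ht1, ht⟩ :=
    exists_missedFraction_lt (one_half_lt_sq_sqrt_sq_add_one_sub_one_div_sq hd8)
  exact ⟨shadowCenter d t, shadowRadius d t, shadowCenter_mem_ellipsoid hd0,
    shadowRadius_pos hd0 ht0 ht1, shadowRadius_add_le_dist hd0 ht0 ht1,
    zero_notMem_closedBall_shadow hd0 ht0 ht1,
    fun _ hv => exists_smul_mem_closedBall_shadow hd0 ht0 ht1 ht hv⟩
end

section
/- There exist an invertible linear map T : ℝ³ → ℝ³, three points c_1, c_2, c_3 on the unit sphere (‖c_i‖ = 1), and three positive reals λ_1, λ_2, λ_3, such that the three sets E_i = {c_i + λ_i • T x : ‖x‖ ≤ 1} (mutually homothetic closed prolate ellipsoids with centers c_i on the sphere) are pairwise disjoint, none contains the origin, and they generate the shadow at the center of the sphere: every line through the origin intersects at least one E_i. -/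
/-!
Scaling the coordinates by `m = (1, 10, 100)` turns the ellipsoid `E i` into the ball of radius
`5/6 · mᵢ` about `mᵢ • eᵢ`, and lines through the origin into lines through the origin. The line
`ℝ • w` meets that ball iff `wᵢ² ≥ (11/36) ‖w‖²`, which holds for the largest coordinate of `w`
since `wᵢ² ≥ ‖w‖² / 3` there. Two of the balls are separated by the `i`-th coordinate of the larger
one, because `5/6 · (mᵢ + mⱼ) < mᵢ` when `mⱼ ≤ mᵢ / 10`.
-/

open Metric

noncomputable def scaleCoords {ι : Type*} (m : ι → ℝ) (hm : ∀ j, m j ≠ 0) :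
    EuclideanSpace ℝ ι ≃ₗ[ℝ] EuclideanSpace ℝ ι where
  toFun x := WithLp.toLp 2 fun j => m j * x j
  invFun x := WithLp.toLp 2 fun j => x j / m j
  map_add' x y := by ext j; simp [mul_add]
  map_smul' r x := by ext j; simp; ring
  left_inv x := by ext j; simp [hm j]
  right_inv x := by ext j; simp [hm j, mul_div_cancel₀]

@[simp]
lemma scaleCoords_apply {ι : Type*} (m : ι → ℝ) (hm : ∀ j, m j ≠ 0) (x : EuclideanSpace ℝ ι)
    (j : ι) : scaleCoords m hm x j = m j * x j := rfl

lemma scaleCoords_single {ι : Type*} [DecidableEq ι] (m : ι → ℝ) (hm : ∀ j, m j ≠ 0) (i : ι)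
    (a : ℝ) : scaleCoords m hm (EuclideanSpace.single i a) = EuclideanSpace.single i (m i * a) := by
  ext j
  by_cases h : j = i
  · subst h; simp
  · simp [h]

lemma setOf_add_smul_apply_eq_preimage_closedBall {E F : Type*} [NormedAddCommGroup E]
    [NormedSpace ℝ E] [AddCommGroup F] [Module ℝ F] (T : E ≃ₗ[ℝ] F) (c : F) {r : ℝ} (hr : 0 < r) :
    {y | ∃ x : E, ‖x‖ ≤ 1 ∧ y = c + r • T x} = T.symm ⁻¹' closedBall (T.symm c) r := by
  ext y
  simp only [Set.mem_ofPred_eq, Set.mem_preimage, mem_closedBall, dist_eq_norm]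
  constructor
  · rintro ⟨x, hx, rfl⟩
    simpa [norm_smul, abs_of_pos hr] using mul_le_of_le_one_right hr.le hx
  · intro hy
    refine ⟨r⁻¹ • (T.symm y - T.symm c), ?_, ?_⟩
    · rw [norm_smul, Real.norm_of_nonneg (inv_nonneg.2 hr.le)]
      exact inv_mul_le_one_of_le₀ hy hr.le
    · simp [smul_smul, hr.ne']

lemma exists_smul_mem_closedBall {F : Type*} [NormedAddCommGroup F] [InnerProductSpace ℝ F]
    {a w : F} {r : ℝ} (hw : w ≠ 0) (hr : 0 ≤ r)
    (h : ‖a‖ ^ 2 * ‖w‖ ^ 2 - inner ℝ a w ^ 2 ≤ r ^ 2 * ‖w‖ ^ 2) :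
    ∃ t : ℝ, t • w ∈ closedBall a r := by
  have hN : 0 < ‖w‖ ^ 2 := by positivity
  refine ⟨inner ℝ a w / ‖w‖ ^ 2, ?_⟩
  have hdist : ‖(inner ℝ a w / ‖w‖ ^ 2) • w - a‖ ^ 2
      = (‖a‖ ^ 2 * ‖w‖ ^ 2 - inner ℝ a w ^ 2) / ‖w‖ ^ 2 := by
    rw [norm_sub_sq_real, norm_smul, real_inner_smul_left, real_inner_comm, mul_pow,
      Real.norm_eq_abs, sq_abs]
    field_simp
    ring
  rw [mem_closedBall, dist_eq_norm, ← pow_le_pow_iff_left₀ (norm_nonneg _) hr two_ne_zero, hdist]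
  exact div_le_of_le_mul₀ hN.le (by positivity) h

lemma EuclideanSpace.exists_norm_sq_le_card_mul_sq {ι : Type*} [Fintype ι] [Nonempty ι]
    (w : EuclideanSpace ℝ ι) : ∃ i, ‖w‖ ^ 2 ≤ Fintype.card ι * w i ^ 2 := by
  obtain ⟨i, hi⟩ := Finite.exists_max fun j => w j ^ 2
  refine ⟨i, ?_⟩
  calc ‖w‖ ^ 2 = ∑ j, w j ^ 2 := EuclideanSpace.real_norm_sq_eq w
    _ ≤ ∑ _j, w i ^ 2 := Finset.sum_le_sum fun j _ => hi j
    _ = Fintype.card ι * w i ^ 2 := by simp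

lemma EuclideanSpace.disjoint_closedBall_single {ι : Type*} [Fintype ι] [DecidableEq ι] {i j : ι}
    (hij : i ≠ j) {a b r s : ℝ} (h : r + s < a) :
    Disjoint (closedBall (EuclideanSpace.single i a) r)
      (closedBall (EuclideanSpace.single j b) s) := by
  rw [Set.disjoint_left]
  intro z hzi hzj
  have hi := (PiLp.dist_apply_le z _ i).trans (mem_closedBall.1 hzi)
  have hj := (PiLp.dist_apply_le z _ i).trans (mem_closedBall.1 hzj)
  simp only [PiLp.single_eq_same, Real.dist_eq, ne_eq, hij, not_false_eq_true,
    PiLp.single_eq_of_ne, dist_zero_right, Real.norm_eq_abs] at hi hj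
  linarith [abs_le.1 hi, abs_le.1 hj]

lemma EuclideanSpace.exists_smul_mem_closedBall_single {ι : Type*} [Fintype ι] [DecidableEq ι]
    {w : EuclideanSpace ℝ ι} (hw : w ≠ 0) (a : ι → ℝ) {ρ : ℝ} (hρ : 0 ≤ ρ)
    (h : (Fintype.card ι - 1 : ℝ) ≤ Fintype.card ι * ρ ^ 2) :
    ∃ i, ∃ t : ℝ, t • w ∈ closedBall (EuclideanSpace.single i (a i)) (ρ * |a i|) := by
  have : Nonempty ι := by
    contrapose! hw
    ext k
    exact isEmptyElim k
  obtain ⟨i, hi⟩ := EuclideanSpace.exists_norm_sq_le_card_mul_sq w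
  refine ⟨i, exists_smul_mem_closedBall hw (by positivity) ?_⟩
  simp only [PiLp.norm_single, EuclideanSpace.inner_single_left, Real.norm_eq_abs, conj_trivial,
    mul_pow, sq_abs]
  have hn : (0 : ℝ) < Fintype.card ι := by exact_mod_cast Fintype.card_pos
  refine le_of_mul_le_mul_left ?_ hn
  nlinarith [mul_le_mul_of_nonneg_left h (by positivity : 0 ≤ a i ^ 2 * ‖w‖ ^ 2),
    mul_le_mul_of_nonneg_left hi (sq_nonneg (a i))]

/-- Three mutually homothetic closed ellipsoids with centers on the unit sphere,
pairwise disjoint, none containing the origin, can generate the shadow at the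
sphere's center. -/
theorem exists_three_homothetic_ellipsoids_shadow :
    ∃ (T : EuclideanSpace ℝ (Fin 3) ≃ₗ[ℝ] EuclideanSpace ℝ (Fin 3))
      (c : Fin 3 → EuclideanSpace ℝ (Fin 3)) (lam : Fin 3 → ℝ)
      (E : Fin 3 → Set (EuclideanSpace ℝ (Fin 3))),
      (∀ i, E i = {y | ∃ x : EuclideanSpace ℝ (Fin 3), ‖x‖ ≤ 1 ∧ y = c i + lam i • T x}) ∧
      (∀ i, ‖c i‖ = 1) ∧
      (∀ i, 0 < lam i) ∧
      (∀ i j, i ≠ j → Disjoint (E i) (E j)) ∧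
      (∀ i, (0 : EuclideanSpace ℝ (Fin 3)) ∉ E i) ∧
      (∀ v : EuclideanSpace ℝ (Fin 3), v ≠ 0 →
        ∃ (i : Fin 3) (t : ℝ), t • v ∈ E i) := by
  set m : Fin 3 → ℝ := ![1, 10, 100]
  have hm : ∀ j, 0 < m j := by intro j; fin_cases j <;> norm_num [m]
  set S := scaleCoords m fun j => (hm j).ne'
  refine ⟨S.symm, fun i => EuclideanSpace.single i 1, fun i => 5 / 6 * m i,
    fun i => S ⁻¹' closedBall (EuclideanSpace.single i (m i)) (5 / 6 * m i),
    fun i => ?_, fun i => by simp, fun i => by linarith [hm i], fun i j hij => ?_, fun i => ?_,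
    fun v hv => ?_⟩
  · rw [setOf_add_smul_apply_eq_preimage_closedBall _ _ (by linarith [hm i]), LinearEquiv.symm_symm,
      scaleCoords_single, mul_one]
  · have hsep : 5 / 6 * m i + 5 / 6 * m j < m i ∨ 5 / 6 * m j + 5 / 6 * m i < m j := by
      revert hij; fin_cases i <;> fin_cases j <;> norm_num [m]
    rcases hsep with h | h
    · exact (EuclideanSpace.disjoint_closedBall_single hij h).preimage S
    · exact ((EuclideanSpace.disjoint_closedBall_single hij.symm h).preimage S).symm
  · norm_num [abs_of_pos (hm i), hm i]
  · obtain ⟨i, t, ht⟩ := EuclideanSpace.exists_smul_mem_closedBall_single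
      ((LinearEquiv.map_ne_zero_iff S).2 hv) m (ρ := 5 / 6) (by norm_num) (by norm_num)
    exact ⟨i, t, by simpa [abs_of_pos (hm i)] using ht⟩
end
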